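/- Equilibrated MLMC error bound reduces to a zeta-function sum: for s₀ > 0, κ > 0, ε > 0, mesh widths h_j = 2^{−j} h₀ and sample numbers M₀ = ⌈h_J^{−2s₀} κ⌉, M_j = ⌈(h_{j−1}/h_J)^{2s₀} j^{1+ε} κ⌉, one has (1/M₀) + Σ_{j=1}^J (h_{j−1}^{2s₀}/M_j) + h_J^{2s₀} ≤ (1 + ζ(1+ε)/κ + 1/κ) · h_J^{2s₀}, where ζ is the Riemann zeta function. -/

import Mathlib

/-!
Each sample number is the ceiling of a quantity chosen so that the corresponding error term,
bounded through `1 / ⌈x⌉ ≤ 1 / x`, collapses to `h_J^{2s₀} / κ` (for `M₀`) or to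
`h_J^{2s₀} j^{-(1+ε)} / κ` (for `M_j`). Summing over the levels, the `p`-series with `p = 1 + ε > 1`
is dominated by `ζ(1 + ε)`.
-/

open Finset

lemma div_natCeil_le_div {a x : ℝ} (ha : 0 ≤ a) (hx : 0 < x) : a / ⌈x⌉₊ ≤ a / x :=
  div_le_div_of_nonneg_left ha hx (Nat.le_ceil x)

lemma one_div_natCeil_rpow_neg_mul_le {b r κ : ℝ} (hb : 0 < b) (hκ : 0 < κ) :
    1 / (⌈b ^ (-r) * κ⌉₊ : ℝ) ≤ b ^ r / κ :=
  calc 1 / (⌈b ^ (-r) * κ⌉₊ : ℝ)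
      ≤ 1 / (b ^ (-r) * κ) := div_natCeil_le_div zero_le_one (by positivity)
    _ = b ^ r / κ := by rw [Real.rpow_neg hb.le]; field_simp

lemma rpow_div_natCeil_div_rpow_mul_le {a b r p x κ : ℝ} (ha : 0 < a) (hb : 0 < b) (hx : 0 < x)
    (hκ : 0 < κ) : a ^ r / (⌈(a / b) ^ r * x ^ p * κ⌉₊ : ℝ) ≤ b ^ r / κ * x ^ (-p) :=
  calc a ^ r / (⌈(a / b) ^ r * x ^ p * κ⌉₊ : ℝ)
      ≤ a ^ r / ((a / b) ^ r * x ^ p * κ) := div_natCeil_le_div (by positivity) (by positivity)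
    _ = b ^ r / κ * x ^ (-p) := by
      have : a ^ r ≠ 0 := (Real.rpow_pos_of_pos ha r).ne'
      rw [Real.div_rpow ha.le hb.le, Real.rpow_neg hx.le]
      field_simp

lemma sum_Icc_one_le_tsum_succ {f : ℕ → ℝ} (hf : Summable fun n => f (n + 1))
    (hf_nonneg : ∀ n, 0 ≤ f (n + 1)) (J : ℕ) : ∑ j ∈ Icc 1 J, f j ≤ ∑' n, f (n + 1) := by
  have hIcc : ∑ j ∈ Icc 1 J, f j = ∑ n ∈ range J, f (n + 1) := by
    rw [← Ico_add_one_right_eq_Icc, sum_Ico_eq_sum_range, Nat.add_sub_cancel]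
    simp only [add_comm 1]
  rw [hIcc]
  exact hf.sum_le_tsum _ fun n _ => hf_nonneg n

lemma sum_Icc_one_rpow_neg_le_tsum {p : ℝ} (hp : 1 < p) (J : ℕ) :
    ∑ j ∈ Icc 1 J, (j : ℝ) ^ (-p) ≤ ∑' n : ℕ, ((n : ℝ) + 1) ^ (-p) := by
  have hsum : Summable fun n : ℕ => ((n : ℝ) + 1) ^ (-p) := by
    have := (summable_nat_add_iff 1).mpr (Real.summable_nat_rpow.mpr (by linarith : -p < -1))
    simpa only [Nat.cast_add, Nat.cast_one] using this
  simpa only [Nat.cast_add, Nat.cast_one] using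
    sum_Icc_one_le_tsum_succ (f := fun n : ℕ => (n : ℝ) ^ (-p)) (by simpa using hsum)
      (fun n => by positivity) J

theorem mlmc_equilibrated_error_bound_general
    (J : ℕ) (h₀ s₀ ε κ : ℝ) (hh₀ : 0 < h₀) (hε : 0 < ε) (hκ : 0 < κ) :
    let h : ℕ → ℝ := fun j => (2 : ℝ) ^ (-(j : ℝ)) * h₀
    let M : ℕ → ℕ := fun j =>
      if j = 0 then ⌈(h J) ^ (-(2 * s₀)) * κ⌉₊
      else ⌈(h (j - 1) / h J) ^ (2 * s₀) * (j : ℝ) ^ (1 + ε) * κ⌉₊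
    1 / (M 0 : ℝ) + (∑ j ∈ Finset.Icc 1 J, (h (j - 1)) ^ (2 * s₀) / (M j : ℝ))
        + (h J) ^ (2 * s₀)
      ≤ (1 + (∑' n : ℕ, ((n : ℝ) + 1) ^ (-(1 + ε))) / κ + 1 / κ) * (h J) ^ (2 * s₀) := by
  intro h M
  have hpos (j : ℕ) : 0 < h j := by positivity
  set A := h J ^ (2 * s₀)
  set Z := ∑' n : ℕ, ((n : ℝ) + 1) ^ (-(1 + ε))
  have hcoarse : 1 / (M 0 : ℝ) ≤ A / κ := one_div_natCeil_rpow_neg_mul_le (hpos J) hκ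
  have hlevels : ∑ j ∈ Icc 1 J, h (j - 1) ^ (2 * s₀) / (M j : ℝ) ≤ A / κ * Z :=
    calc ∑ j ∈ Icc 1 J, h (j - 1) ^ (2 * s₀) / (M j : ℝ)
        ≤ ∑ j ∈ Icc 1 J, A / κ * (j : ℝ) ^ (-(1 + ε)) := by
          refine sum_le_sum fun j hj => ?_
          have hj : j ≠ 0 := by rw [mem_Icc] at hj; omega
          simpa only [M, if_neg hj] using
            rpow_div_natCeil_div_rpow_mul_le (hpos (j - 1)) (hpos J) (by positivity) hκ
      _ = A / κ * ∑ j ∈ Icc 1 J, (j : ℝ) ^ (-(1 + ε)) := (mul_sum _ _ _).symm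
      _ ≤ A / κ * Z := by
          gcongr
          exact sum_Icc_one_rpow_neg_le_tsum (by linarith) J
  calc 1 / (M 0 : ℝ) + ∑ j ∈ Icc 1 J, h (j - 1) ^ (2 * s₀) / (M j : ℝ) + A
      ≤ A / κ + A / κ * Z + A := by gcongr
    _ = (1 + Z / κ + 1 / κ) * A := by ring

/-- Equilibrated MLMC error bound via a zeta-function sum: with mesh widths `h_j = 2^{−j}h₀`
and sample numbers `M₀ = ⌈h_J^{−2s₀}κ⌉`, `M_j = ⌈(h_{j−1}/h_J)^{2s₀} j^{1+ε} κ⌉`,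
`(1/M₀) + ∑_{j=1}^J h_{j−1}^{2s₀}/M_j + h_J^{2s₀} ≤ (1 + ζ(1+ε)/κ + 1/κ) h_J^{2s₀}`,
where `ζ(1+ε) = ∑_{n≥1} n^{−(1+ε)}`. -/
theorem mlmc_equilibrated_error_bound
    (J : ℕ) (h₀ s₀ ε κ : ℝ) (hh₀ : 0 < h₀) (hs₀ : 0 < s₀) (hε : 0 < ε) (hκ : 0 < κ) :
    let h : ℕ → ℝ := fun j => (2 : ℝ) ^ (-(j : ℝ)) * h₀
    let M : ℕ → ℕ := fun j =>
      if j = 0 then ⌈(h J) ^ (-(2 * s₀)) * κ⌉₊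
      else ⌈(h (j - 1) / h J) ^ (2 * s₀) * (j : ℝ) ^ (1 + ε) * κ⌉₊
    1 / (M 0 : ℝ) + (∑ j ∈ Finset.Icc 1 J, (h (j - 1)) ^ (2 * s₀) / (M j : ℝ))
        + (h J) ^ (2 * s₀)
      ≤ (1 + (∑' n : ℕ, ((n : ℝ) + 1) ^ (-(1 + ε))) / κ + 1 / κ) * (h J) ^ (2 * s₀) :=
  mlmc_equilibrated_error_bound_general J h₀ s₀ ε κ hh₀ hε hκ
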